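/- Let E, F ⊂ K be pseudo-convergent sequences of algebraic type, both with breadth δ, and let u be an extension of v to the algebraic closure K̄. If β is a pseudo-limit of E with respect to u and β' is a pseudo-limit of F with respect to u, then d_δ(V_E,V_F) = max{e^{−u(β−β')} − e^{−δ}, 0}. -/

import Mathlib

/-! A pseudo-limit `β` of `s` satisfies `u(β - s_n) = v(s_{n+1} - s_n)`, which tends to `δ`.
Writing `s_n - t_n = (s_n - β) + (β - β') + (β' - t_n)`, the ultrametric inequality gives
`d(s_n, t_n) ≤ max (d(s_n, β), e^{-u(β - β')}, d(β', t_n))`, whose excess over `e^{-δ}` tends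
to the right-hand side; and when `u(β - β') < δ` the middle term eventually dominates strictly,
so `d(s_n, t_n) = e^{-u(β - β')}` from some point on. -/

open Filter Topology TopologicalSpace Set Polynomial

noncomputable section

namespace PaperPCZar

variable {K : Type*} [Field K]

/-- `expNeg γ = e^{-γ}` for `γ ∈ ℝ ∪ {∞}`, with `e^{-∞} = 0`. -/
def expNeg (γ : WithTop ℝ) : ℝ := WithTop.recTopCoe 0 (fun r => Real.exp (-r)) γ

/-- `v` is a rank-one (i.e. nontrivial, real-valued) valuation. -/
def IsRankOne (v : AddValuation K (WithTop ℝ)) : Prop := ∃ x : K, v x ≠ 0 ∧ v x ≠ ⊤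

/-- The value group `Γ_v` of `v`, as a subset of `ℝ`. -/
def valueGroup (v : AddValuation K (WithTop ℝ)) : Set ℝ := {r : ℝ | ∃ x : K, v x = (r : WithTop ℝ)}

/-- `ℚΓ_v = {q·γ : q ∈ ℚ, γ ∈ Γ_v}`, the divisible hull of the value group inside `ℝ`. -/
def QGamma (v : AddValuation K (WithTop ℝ)) : Set ℝ :=
  {r : ℝ | ∃ (q : ℚ) (γ : ℝ), γ ∈ valueGroup v ∧ r = q * γ}

/-- Order convergence of a sequence in `ℝ ∪ {∞}` to `γ`. -/
def OrdLim (f : ℕ → WithTop ℝ) (γ : WithTop ℝ) : Prop :=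
  (∀ a : WithTop ℝ, a < γ → ∀ᶠ n in atTop, a < f n) ∧
  (∀ b : WithTop ℝ, γ < b → ∀ᶠ n in atTop, f n < b)

/-- `s` is a pseudo-convergent sequence with respect to `v`. -/
def IsPC (v : AddValuation K (WithTop ℝ)) (s : ℕ → K) : Prop :=
  ∀ n, v (s (n + 1) - s n) < v (s (n + 2) - s (n + 1))

/-- `s` is a pseudo-divergent sequence with respect to `v`. -/
def IsPD (v : AddValuation K (WithTop ℝ)) (s : ℕ → K) : Prop :=
  ∀ n, v (s (n + 1) - s (n + 2)) < v (s n - s (n + 1))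

/-- `s` is a pseudo-stationary sequence with respect to `v`. -/
def IsPS (v : AddValuation K (WithTop ℝ)) (s : ℕ → K) : Prop :=
  ∀ n m n' m' : ℕ, n ≠ m → n' ≠ m' → v (s n - s m) = v (s n' - s m')

/-- `δ ∈ ℝ ∪ {∞}` is the breadth of the sequence `s`, i.e. `δ = lim_n v(s_{n+1} - s_n)`. -/
def IsBreadth (v : AddValuation K (WithTop ℝ)) (s : ℕ → K) (δ : WithTop ℝ) : Prop :=
  OrdLim (fun n => v (s (n + 1) - s n)) δ

/-- `α ∈ K` is a pseudo-limit of the pseudo-convergent sequence `s`. -/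
def IsPCLimit (v : AddValuation K (WithTop ℝ)) (s : ℕ → K) (α : K) : Prop :=
  ∀ n, v (α - s n) < v (α - s (n + 1))

/-- `α ∈ K` is a pseudo-limit of the pseudo-divergent sequence `s`. -/
def IsPDLimit (v : AddValuation K (WithTop ℝ)) (s : ℕ → K) (α : K) : Prop :=
  ∀ n, v (α - s (n + 1)) < v (α - s n)

/-- `β ∈ K̄` is a pseudo-limit of `s ⊆ K` with respect to an extension `u` of `v`
to the algebraic closure of `K`. -/
def IsPCLimitAC (u : AddValuation (AlgebraicClosure K) (WithTop ℝ)) (s : ℕ → K)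
    (β : AlgebraicClosure K) : Prop :=
  ∀ n, u (β - algebraMap K (AlgebraicClosure K) (s n)) <
    u (β - algebraMap K (AlgebraicClosure K) (s (n + 1)))

/-- `s` is of transcendental type: for every polynomial `f`, `v(f(s_n))` eventually
stabilizes. -/
def IsTranscendentalType (v : AddValuation K (WithTop ℝ)) (s : ℕ → K) : Prop :=
  ∀ f : Polynomial K, ∃ N, ∀ n ≥ N, v (f.eval (s n)) = v (f.eval (s N))

/-- The ultrametric distance `d(x,y) = e^{-v(x-y)}` on `K`. -/
def dK (v : AddValuation K (WithTop ℝ)) (x y : K) : ℝ := expNeg (v (x - y))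

/-- The set `V_E = {φ ∈ K(X) : φ(s_n) ∈ V for all but finitely many n}`. -/
def VESet (v : AddValuation K (WithTop ℝ)) (s : ℕ → K) : Set (RatFunc K) :=
  {φ : RatFunc K | ∀ᶠ n in atTop, 0 ≤ v (RatFunc.eval (RingHom.id K) (s n) φ)}

/-- `Zar(K(X)|V)`: the valuation subrings of `K(X)` containing (the image of) `V`. -/
def ZarSet (v : AddValuation K (WithTop ℝ)) : Set (ValuationSubring (RatFunc K)) :=
  {W | ∀ x : K, 0 ≤ v x → algebraMap K (RatFunc K) x ∈ W}

/-- `𝒱`: valuation subrings of `K(X)` of the form `V_E`, `E` pseudo-convergent. -/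
def VV (v : AddValuation K (WithTop ℝ)) : Set (ValuationSubring (RatFunc K)) :=
  {W | ∃ s : ℕ → K, IsPC v s ∧ (W : Set (RatFunc K)) = VESet v s}

/-- `𝒱(•,δ)`: those `V_E` with `E` pseudo-convergent of breadth `δ`. -/
def VVδ (v : AddValuation K (WithTop ℝ)) (δ : WithTop ℝ) : Set (ValuationSubring (RatFunc K)) :=
  {W | ∃ s : ℕ → K, IsPC v s ∧ IsBreadth v s δ ∧ (W : Set (RatFunc K)) = VESet v s}

/-- `𝒱_K(•,δ)`: those `V_E` with `E` pseudo-convergent of breadth `δ` having a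
pseudo-limit in `K`. -/
def VVKδ (v : AddValuation K (WithTop ℝ)) (δ : WithTop ℝ) : Set (ValuationSubring (RatFunc K)) :=
  {W | ∃ s : ℕ → K, IsPC v s ∧ IsBreadth v s δ ∧ (∃ α : K, IsPCLimit v s α) ∧
    (W : Set (RatFunc K)) = VESet v s}

/-- `𝒱(β,•)`: those `V_E` with `E` pseudo-convergent having `β ∈ K̄` as a pseudo-limit
with respect to `u`. -/
def VVβ (v : AddValuation K (WithTop ℝ)) (u : AddValuation (AlgebraicClosure K) (WithTop ℝ))
    (β : AlgebraicClosure K) : Set (ValuationSubring (RatFunc K)) :=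
  {W | ∃ s : ℕ → K, IsPC v s ∧ IsPCLimitAC u s β ∧ (W : Set (RatFunc K)) = VESet v s}

/-- `𝒱(β,•)` for a pseudo-limit `β ∈ K`. -/
def VVβK (v : AddValuation K (WithTop ℝ)) (β : K) : Set (ValuationSubring (RatFunc K)) :=
  {W | ∃ s : ℕ → K, IsPC v s ∧ IsPCLimit v s β ∧ (W : Set (RatFunc K)) = VESet v s}

/-- `𝒱_div`: those `V_E` with `E` pseudo-divergent. -/
def VVdiv (v : AddValuation K (WithTop ℝ)) : Set (ValuationSubring (RatFunc K)) :=
  {W | ∃ s : ℕ → K, IsPD v s ∧ (W : Set (RatFunc K)) = VESet v s}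

/-- `𝒱_div(•,δ)`: those `V_E` with `E` pseudo-divergent of breadth `δ`. -/
def VVdivδ (v : AddValuation K (WithTop ℝ)) (δ : WithTop ℝ) : Set (ValuationSubring (RatFunc K)) :=
  {W | ∃ s : ℕ → K, IsPD v s ∧ IsBreadth v s δ ∧ (W : Set (RatFunc K)) = VESet v s}

/-- `𝒱_div(β,•)`: those `V_E` with `E` pseudo-divergent having `β ∈ K` as a pseudo-limit. -/
def VVdivβ (v : AddValuation K (WithTop ℝ)) (β : K) : Set (ValuationSubring (RatFunc K)) :=
  {W | ∃ s : ℕ → K, IsPD v s ∧ IsPDLimit v s β ∧ (W : Set (RatFunc K)) = VESet v s}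

/-- `𝒱_stat(•,δ)`: those `V_E` with `E` pseudo-stationary of breadth `δ`. -/
def VVstatδ (v : AddValuation K (WithTop ℝ)) (δ : WithTop ℝ) :
    Set (ValuationSubring (RatFunc K)) :=
  {W | ∃ s : ℕ → K, (∀ n m : ℕ, n ≠ m → v (s n - s m) = δ) ∧
    (W : Set (RatFunc K)) = VESet v s}

/-- `𝒱_stat(β,•)`: those `V_E` with `E` pseudo-stationary having `β` as a pseudo-limit. -/
def VVstatβ (v : AddValuation K (WithTop ℝ)) (β : K) : Set (ValuationSubring (RatFunc K)) :=
  {W | ∃ (s : ℕ → K) (δ : WithTop ℝ), (∀ n m : ℕ, n ≠ m → v (s n - s m) = δ) ∧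
    (∀ n, δ ≤ v (β - s n)) ∧ (W : Set (RatFunc K)) = VESet v s}

/-- The Zariski topology on the valuation subrings of a field `L`, generated by the
sets `B(φ) = {W : φ ∈ W}`. -/
def zarTop (L : Type*) [Field L] : TopologicalSpace (ValuationSubring L) :=
  generateFrom {U | ∃ φ : L, U = {W : ValuationSubring L | φ ∈ W}}

/-- The constructible topology on the valuation subrings of a field `L`: the coarsest
topology in which all finite intersections `B(φ₁) ∩ ⋯ ∩ B(φ_k)` are open and closed. -/
def consTop (L : Type*) [Field L] : TopologicalSpace (ValuationSubring L) :=
  generateFrom {U | ∃ T : Finset L, U = {W : ValuationSubring L | ∀ φ ∈ T, φ ∈ W} ∨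
    U = {W : ValuationSubring L | ∀ φ ∈ T, φ ∈ W}ᶜ}

/-- The subspace Zariski topology on a set of valuation subrings. -/
def zarSub {L : Type*} [Field L] (S : Set (ValuationSubring L)) : TopologicalSpace ↥S :=
  (zarTop L).induced Subtype.val

/-- The subspace constructible topology on a set of valuation subrings. -/
def consSub {L : Type*} [Field L] (S : Set (ValuationSubring L)) : TopologicalSpace ↥S :=
  (consTop L).induced Subtype.val

/-- `d` is a metric on `X` inducing the topology `t`. -/
def MetrizedBy {X : Type*} (t : TopologicalSpace X) (d : X → X → ℝ) : Prop :=
  (∀ x y, d x y = d y x) ∧ (∀ x y, d x y = 0 ↔ x = y) ∧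
  (∀ x y z, d x z ≤ d x y + d y z) ∧
  t = generateFrom {U : Set X | ∃ (x : X) (ε : ℝ), 0 < ε ∧ U = {y | d x y < ε}}

/-- The topology `t` is metrizable. -/
def IsMetrizable {X : Type*} (t : TopologicalSpace X) : Prop := ∃ d, MetrizedBy t d

/-- The topology `t` is induced by an ultrametric. -/
def IsUltrametrizable {X : Type*} (t : TopologicalSpace X) : Prop :=
  ∃ d, MetrizedBy t d ∧ ∀ x y z, d x z ≤ max (d x y) (d y z)

/-- `dd` computes the distance `d_δ` on `𝒱(•,δ)`:
`d_δ(V_E, V_F) = lim_n max (d(s_n,t_n) - e^{-δ}) 0`. -/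
def IsDistδ (v : AddValuation K (WithTop ℝ)) (δ : WithTop ℝ)
    (dd : ValuationSubring (RatFunc K) → ValuationSubring (RatFunc K) → ℝ) : Prop :=
  ∀ (W W' : ValuationSubring (RatFunc K)) (s t : ℕ → K),
    IsPC v s → IsBreadth v s δ → (W : Set (RatFunc K)) = VESet v s →
    IsPC v t → IsBreadth v t δ → (W' : Set (RatFunc K)) = VESet v t →
    Tendsto (fun n => max (dK v (s n) (t n) - expNeg δ) 0) atTop (𝓝 (dd W W'))

/-- The `Λ`-upper limit topology on the interval `(-∞, b] ⊆ ℝ ∪ {∞}`, generated by the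
half-open intervals `(α, λ]` with `λ ∈ Λ ∪ {∞}`. -/
def upperTopWT (b : WithTop ℝ) (Λ : Set ℝ) : TopologicalSpace {γ : WithTop ℝ // γ ≤ b} :=
  generateFrom {U | ∃ α lam : WithTop ℝ, α ≤ b ∧
    (lam = ⊤ ∨ ∃ r ∈ Λ, lam = (r : WithTop ℝ)) ∧
    U = {γ : {γ : WithTop ℝ // γ ≤ b} | α < (γ : WithTop ℝ) ∧ (γ : WithTop ℝ) ≤ lam}}

/-- The `Λ`-upper limit topology on `(-∞, +∞] = ℝ ∪ {∞}`. -/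
def upperTopAll (Λ : Set ℝ) : TopologicalSpace (WithTop ℝ) :=
  generateFrom {U | ∃ α lam : WithTop ℝ,
    (lam = ⊤ ∨ ∃ r ∈ Λ, lam = (r : WithTop ℝ)) ∧
    U = {γ : WithTop ℝ | α < γ ∧ γ ≤ lam}}

/-- The `Λ`-upper limit topology on an interval `(a, b]` of `ℝ ∪ {±∞}`. -/
def upperTopE (a b : EReal) (Λ : Set ℝ) : TopologicalSpace {x : EReal // a < x ∧ x ≤ b} :=
  generateFrom {U | ∃ α lam : EReal, (a < α ∧ α ≤ b) ∧
    (lam = ⊤ ∨ ∃ r ∈ Λ, lam = (r : EReal)) ∧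
    U = {x : {x : EReal // a < x ∧ x ≤ b} | α < (x : EReal) ∧ (x : EReal) ≤ lam}}


/-- `𝒲`: the valuation domains of the valuations `w_E : φ ↦ lim_n v(φ(s_n))`, as `E`
ranges over the pseudo-convergent sequences for which `w_E` is a valuation. -/
def WW (v : AddValuation K (WithTop ℝ)) : Set (ValuationSubring (RatFunc K)) :=
  {W | ∃ (s : ℕ → K) (w : AddValuation (RatFunc K) (WithTop ℝ)), IsPC v s ∧
    (∀ φ : RatFunc K, OrdLim (fun n => v (RatFunc.eval (RingHom.id K) (s n) φ)) (w φ)) ∧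
    (W : Set (RatFunc K)) = {φ : RatFunc K | 0 ≤ w φ}}

lemma expNeg_coe (r : ℝ) : expNeg r = Real.exp (-r) := rfl

lemma expNeg_nonneg (γ : WithTop ℝ) : 0 ≤ expNeg γ := by
  cases γ with
  | top => exact le_rfl
  | coe r => exact (Real.exp_pos _).le

lemma expNeg_antitone : Antitone expNeg := by
  intro a b hab
  cases b with
  | top => exact expNeg_nonneg a
  | coe r =>
    lift a to ℝ using ne_top_of_le_ne_top WithTop.coe_ne_top hab
    exact Real.exp_le_exp.2 (neg_le_neg (WithTop.coe_le_coe.1 hab))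

lemma continuous_expNeg : Continuous expNeg := by
  refine continuous_iff_continuousAt.2 fun γ => ?_
  cases γ with
  | top =>
    refine tendsto_order.2 ⟨fun a ha => .of_forall fun γ => ha.trans_le (expNeg_nonneg γ),
      fun b hb => ?_⟩
    filter_upwards [(WithTop.tendsto_nhds_top_iff id).1 tendsto_id (-Real.log (b / 2))]
      with γ hγ
    calc expNeg γ ≤ expNeg (-Real.log (b / 2) : ℝ) := expNeg_antitone hγ.le
      _ = b / 2 := by rw [expNeg_coe, neg_neg, Real.exp_log (half_pos hb)]
      _ < b := half_lt_self hb
  | coe r =>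
    rw [ContinuousAt, WithTop.nhds_coe, tendsto_map'_iff]
    exact (Real.continuous_exp.comp continuous_neg).tendsto r

lemma OrdLim.tendsto_expNeg {f : ℕ → WithTop ℝ} {γ : WithTop ℝ} (h : OrdLim f γ) :
    Tendsto (fun n => expNeg (f n)) atTop (𝓝 (expNeg γ)) :=
  (continuous_expNeg.tendsto γ).comp (tendsto_order.2 h)

section ThreePoints

variable {R Γ₀ : Type*} [Ring R] [LinearOrderedAddCommMonoidWithTop Γ₀] (u : AddValuation R Γ₀)

theorem _root_.AddValuation.min_le_map_sub_of_three (x y a b : R) :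
    min (u (a - x)) (min (u (a - b)) (u (b - y))) ≤ u (x - y) := by
  rw [u.map_sub_swap a x, show x - y = (x - a) + ((a - b) + (b - y)) by abel]
  exact (min_le_min_left _ (u.map_add _ _)).trans (u.map_add _ _)

theorem _root_.AddValuation.map_sub_eq_of_lt_of_lt {x y a b : R} (hx : u (a - b) < u (a - x))
    (hy : u (a - b) < u (b - y)) : u (x - y) = u (a - b) := by
  have hby : u ((a - b) + (b - y)) = u (a - b) := u.map_add_eq_of_lt_left hy
  rw [show x - y = (x - a) + ((a - b) + (b - y)) by abel,
    u.map_add_eq_of_lt_right (by rwa [hby, u.map_sub_swap x a]), hby]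

end ThreePoints

lemma expNeg_map_sub_le {R : Type*} [Ring R] (u : AddValuation R (WithTop ℝ)) (x y a b : R) :
    expNeg (u (x - y)) ≤
      max (expNeg (u (a - x))) (max (expNeg (u (a - b))) (expNeg (u (b - y)))) := by
  rw [← expNeg_antitone.map_min, ← expNeg_antitone.map_min]
  exact expNeg_antitone (u.min_le_map_sub_of_three x y a b)

section PseudoLimit

variable {v : AddValuation K (WithTop ℝ)} {u : AddValuation (AlgebraicClosure K) (WithTop ℝ)}
  {s : ℕ → K} {β : AlgebraicClosure K}

lemma IsPCLimitAC.map_sub_eq (hu : ∀ x : K, u (algebraMap K (AlgebraicClosure K) x) = v x)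
    (hβ : IsPCLimitAC u s β) (n : ℕ) :
    u (β - algebraMap K (AlgebraicClosure K) (s n)) = v (s (n + 1) - s n) := by
  rw [← hu, RingHom.map_sub, ← sub_sub_sub_cancel_left _ (algebraMap K _ (s (n + 1))) β,
    u.map_sub_eq_of_lt_left (hβ n)]

lemma IsPCLimitAC.ordLim (hu : ∀ x : K, u (algebraMap K (AlgebraicClosure K) x) = v x)
    (hβ : IsPCLimitAC u s β) {δ : WithTop ℝ} (hδ : IsBreadth v s δ) :
    OrdLim (fun n => u (β - algebraMap K (AlgebraicClosure K) (s n))) δ := by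
  rw [funext (hβ.map_sub_eq hu)]
  exact hδ

end PseudoLimit

theorem statement4_general (v : AddValuation K (WithTop ℝ))
    (u : AddValuation (AlgebraicClosure K) (WithTop ℝ))
    (hu : ∀ x : K, u (algebraMap K (AlgebraicClosure K) x) = v x)
    (δ : WithTop ℝ)
    (dd : ValuationSubring (RatFunc K) → ValuationSubring (RatFunc K) → ℝ)
    (hdd : IsDistδ v δ dd)
    (s t : ℕ → K) (hs : IsPC v s)
    (hsδ : IsBreadth v s δ)
    (ht : IsPC v t) (htδ : IsBreadth v t δ)
    (W W' : ValuationSubring (RatFunc K))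
    (hW : (W : Set (RatFunc K)) = VESet v s) (hW' : (W' : Set (RatFunc K)) = VESet v t)
    (β β' : AlgebraicClosure K) (hβ : IsPCLimitAC u s β) (hβ' : IsPCLimitAC u t β') :
    dd W W' = max (expNeg (u (β - β')) - expNeg δ) 0 := by
  set S := fun n => algebraMap K (AlgebraicClosure K) (s n)
  set T := fun n => algebraMap K (AlgebraicClosure K) (t n)
  set c := u (β - β')
  have hσ : OrdLim (fun n => u (β - S n)) δ := hβ.ordLim hu hsδ
  have hτ : OrdLim (fun n => u (β' - T n)) δ := hβ'.ordLim hu htδ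
  have hdist (n : ℕ) : dK v (s n) (t n) = expNeg (u (S n - T n)) := by
    rw [dK, ← hu, map_sub]
  have hupper (n : ℕ) : max (dK v (s n) (t n) - expNeg δ) 0 ≤
      max (max (expNeg (u (β - S n))) (max (expNeg c) (expNeg (u (β' - T n)))) - expNeg δ) 0 := by
    rw [hdist]
    gcongr
    exact expNeg_map_sub_le u _ _ β β'
  have hupper_lim : Tendsto (fun n => max (max (expNeg (u (β - S n)))
      (max (expNeg c) (expNeg (u (β' - T n)))) - expNeg δ) 0) atTop
      (𝓝 (max (expNeg c - expNeg δ) 0)) := by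
    convert ((hσ.tendsto_expNeg.max (tendsto_const_nhds.max hτ.tendsto_expNeg)).sub_const
      (expNeg δ)).max tendsto_const_nhds using 2
    grind
  have hlower : ∀ᶠ n in atTop,
      max (expNeg c - expNeg δ) 0 ≤ max (dK v (s n) (t n) - expNeg δ) 0 := by
    rcases lt_or_ge c δ with hc | hc
    · filter_upwards [hσ.1 c hc, hτ.1 c hc] with n hσn hτn
      rw [hdist, u.map_sub_eq_of_lt_of_lt hσn hτn]
    · rw [max_eq_right (sub_nonpos.2 (expNeg_antitone hc))]
      exact .of_forall fun n => le_max_right _ _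
  exact tendsto_nhds_unique (hdd W W' s t hs hsδ hW ht htδ hW')
    (tendsto_of_tendsto_of_tendsto_of_le_of_le' tendsto_const_nhds hupper_lim hlower
      (.of_forall hupper))

/-- If `E, F` are pseudo-convergent of algebraic type with breadth `δ`
and `β, β'` are pseudo-limits (in the algebraic closure, w.r.t. an extension `u` of `v`)
of `E` and `F` respectively, then `d_δ(V_E,V_F) = max (e^{-u(β-β')} - e^{-δ}) 0`. -/
theorem statement4 (v : AddValuation K (WithTop ℝ)) (hv : IsRankOne v)
    (u : AddValuation (AlgebraicClosure K) (WithTop ℝ))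
    (hu : ∀ x : K, u (algebraMap K (AlgebraicClosure K) x) = v x)
    (δ : WithTop ℝ)
    (dd : ValuationSubring (RatFunc K) → ValuationSubring (RatFunc K) → ℝ)
    (hdd : IsDistδ v δ dd)
    (s t : ℕ → K) (hs : IsPC v s) (hsalg : ¬ IsTranscendentalType v s)
    (hsδ : IsBreadth v s δ)
    (ht : IsPC v t) (htalg : ¬ IsTranscendentalType v t) (htδ : IsBreadth v t δ)
    (W W' : ValuationSubring (RatFunc K))
    (hW : (W : Set (RatFunc K)) = VESet v s) (hW' : (W' : Set (RatFunc K)) = VESet v t)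
    (β β' : AlgebraicClosure K) (hβ : IsPCLimitAC u s β) (hβ' : IsPCLimitAC u t β') :
    dd W W' = max (expNeg (u (β - β')) - expNeg δ) 0 :=
  statement4_general v u hu δ dd hdd s t hs hsδ ht htδ W W' hW hW' β β' hβ hβ'

end PaperPCZar
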